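/- For a Noetherian k-algebra A, the map HH^m(θ_p) : HH^m(A, Ω_nc^p(A)) → HH^m(A, Ω_nc^{p+1}(A)) induced by f ↦ f ⊗ id_{s\bar{A}} coincides with the connecting morphism in the long exact cohomology sequence associated to the short exact sequence of bimodules 0 → s^{-1}Ω_nc^{p+1}(A) → Bar_p(A) → Ω_nc^p(A) → 0 (under the identification Ω_nc ≅ Ω_sy and HH^{m+1}(A, s^{-1}Ω_nc^{p+1}(A)) ≅ HH^m(A, Ω_nc^{p+1}(A))). -/
import Mathlib


open TensorProduct PiTensorProduct

namespace TateHochschild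

noncomputable section

variable (k A : Type) [Field k] [Ring A] [Algebra k A]

abbrev Abar : Type := A ⧸ (Submodule.span k ({(1 : A)} : Set A))
def pr : A →ₗ[k] Abar k A := (Submodule.span k ({(1 : A)} : Set A)).mkQ
abbrev T (n : ℕ) : Type := ⨂[k] (_ : Fin n), Abar k A
abbrev Omega (n : ℕ) : Type := A ⊗[k] T k A n
def tp (n : ℕ) (v : ℕ → A) : T k A n := tprod k fun i : Fin n => pr k A (v i)
def omk (n : ℕ) (a0 : A) (v : ℕ → A) : Omega k A n := a0 ⊗ₜ tp k A n v

variable {A} in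
def shiftT (v : ℕ → A) : ℕ → A := fun j => v (j + 1)
variable {A} in
def mulAt (v : ℕ → A) (i : ℕ) : ℕ → A :=
  fun j => if j < i then v j else if j = i then v i * v (i + 1) else v (j + 1)
variable {A} in
def setAt (v : ℕ → A) (n : ℕ) (a : A) : ℕ → A := fun j => if j = n then a else v j
variable {A} in
/-- `catAt a v x w` is the tuple `v 0, …, v (a-1), x, w 0, w 1, …`. -/
def catAt (a : ℕ) (v : ℕ → A) (x : A) (w : ℕ → A) : ℕ → A :=
  fun j => if j < a then v j else if j = a then x else w (j - a - 1)

def sg (z : ℤ) : ℤ := if Even z then 1 else -1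

def rGen (n : ℕ) (a0 : A) (v : ℕ → A) (a' : A) : Omega k A n :=
  sg (n : ℤ) • omk k A n (a0 * setAt v n a' 0) (shiftT (setAt v n a'))
    + ∑ i ∈ Finset.range n, sg ((n : ℤ) + i + 1) • omk k A n a0 (mulAt (setAt v n a') i)

def IsRAct (n : ℕ) (act : Omega k A n →ₗ[k] A →ₗ[k] Omega k A n) : Prop :=
  ∀ (a0 : A) (v : ℕ → A) (a' : A), act (omk k A n a0 v) a' = rGen k A n a0 v a'

def lmul (n : ℕ) (a : A) : Omega k A n →ₗ[k] Omega k A n :=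
  LinearMap.rTensor (T k A n) (LinearMap.mulLeft k a)

abbrev Bar (n : ℕ) : Type := A ⊗[k] (T k A n ⊗[k] A)
def bmk (n : ℕ) (a0 : A) (v : ℕ → A) (a' : A) : Bar k A n := a0 ⊗ₜ (tp k A n v ⊗ₜ a')

def dGen (p : ℕ) (a0 : A) (v : ℕ → A) (a' : A) : Bar k A p :=
  bmk k A p (a0 * v 0) (shiftT v) a'
    + ∑ i ∈ Finset.range p, sg ((i : ℤ) + 1) • bmk k A p a0 (mulAt v i) a'
    + sg ((p : ℤ) + 1) • bmk k A p a0 v (v p * a')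

def IsBarDiff (p : ℕ) (D : Bar k A (p + 1) →ₗ[k] Bar k A p) : Prop :=
  ∀ (a0 : A) (v : ℕ → A) (a' : A), D (bmk k A (p + 1) a0 v a') = dGen k A p a0 v a'

def castT {a b : ℕ} (h : a = b) : T k A a ≃ₗ[k] T k A b :=
  PiTensorProduct.reindex k (fun _ => Abar k A) (finCongr h)
def castO {a b : ℕ} (h : a = b) : Omega k A a ≃ₗ[k] Omega k A b :=
  TensorProduct.congr (LinearEquiv.refl k A) (castT k A h)
def splitT (a b : ℕ) : T k A (a + b) ≃ₗ[k] T k A a ⊗[k] T k A b :=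
  (PiTensorProduct.reindex k (fun _ => Abar k A) finSumFinEquiv.symm) ≪≫ₗ
    (PiTensorProduct.tmulEquiv k (Abar k A)).symm
def appOut (p q : ℕ) : Omega k A p ⊗[k] T k A q ≃ₗ[k] Omega k A (p + q) :=
  (TensorProduct.assoc k A (T k A p) (T k A q)) ≪≫ₗ
    TensorProduct.congr (LinearEquiv.refl k A) (splitT k A p q).symm

abbrev Cochain (n p : ℕ) : Type := T k A n →ₗ[k] Omega k A p

def IsDelta (P N : ℕ) (act : Omega k A P →ₗ[k] A →ₗ[k] Omega k A P)
    (F : Cochain k A N P) (D : Cochain k A (N + 1) P) : Prop :=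
  ∀ v : ℕ → A,
    D (tp k A (N + 1) v) =
      sg ((N : ℤ) + P + 1) •
        (lmul k A P (v 0) (F (tp k A N (shiftT v)))
          + ∑ i ∈ Finset.range N, sg ((i : ℤ) + 1) • F (tp k A N (mulAt v i))
          + sg ((N : ℤ) + 1) • act (F (tp k A N v)) (v N))

def thetaM (P N : ℕ) (F : Cochain k A N P) : Cochain k A (N + 1) (P + 1) :=
  (appOut k A P 1).toLinearMap ∘ₗ LinearMap.rTensor (T k A 1) F ∘ₗ (splitT k A N 1).toLinearMap

/-- The one-bar appending map `Ω^p → A → Ω^{p+1}`, `(x, a) ↦ x ⊗ s\bar a`,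
characterized on generators. -/
def IsApp (p : ℕ) (app : Omega k A p →ₗ[k] A →ₗ[k] Omega k A (p + 1)) : Prop :=
  ∀ (a0 : A) (v : ℕ → A) (a : A), app (omk k A p a0 v) a = omk k A (p + 1) a0 (setAt v p a)

def bar1 : T k A 1 ≃ₗ[k] Abar k A := PiTensorProduct.subsingletonEquiv (0 : Fin 1)

/-- `ḡ = (π ⊗ id^{⊗q}) ∘ g : (sĀ)^{⊗n} → (sĀ)^{⊗(q+1)}` for a cochain `g`. -/
def barify (n q : ℕ) (g : Cochain k A n q) : T k A n →ₗ[k] T k A (q + 1) :=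
  (castT k A (Nat.add_comm 1 q)).toLinearMap
    ∘ₗ (splitT k A 1 q).symm.toLinearMap
    ∘ₗ (TensorProduct.congr (bar1 k A).symm (LinearEquiv.refl k (T k A q))).toLinearMap
    ∘ₗ LinearMap.rTensor (T k A q) (pr k A)
    ∘ₗ g

/-- Apply `F` to the middle `b` factors of `(sĀ)^{⊗(a+b+c)}`. -/
def mapMid (a b c b' : ℕ) (F : T k A b →ₗ[k] T k A b') :
    T k A (a + b + c) →ₗ[k] T k A (a + b' + c) :=
  (splitT k A (a + b') c).symm.toLinearMap
    ∘ₗ LinearMap.rTensor (T k A c)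
        ((splitT k A a b').symm.toLinearMap
          ∘ₗ LinearMap.lTensor (T k A a) F
          ∘ₗ (splitT k A a b).toLinearMap)
    ∘ₗ (splitT k A (a + b) c).toLinearMap

/-- The circle product `f ∘_{j+1} g` inserting `ḡ` into the `(j+1)`-st input of `f`. -/
def circP (p q m n : ℕ) (f : Cochain k A m p) (g : Cochain k A n q) (j : ℕ) (hj : j < m) :
    Cochain k A (m + n - 1) (p + q) :=
  (appOut k A p q).toLinearMap
    ∘ₗ LinearMap.rTensor (T k A q) f
    ∘ₗ (splitT k A m q).toLinearMap
    ∘ₗ (castT k A (by omega : j + (q + 1) + (m - 1 - j) = m + q)).toLinearMap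
    ∘ₗ mapMid k A j n (m - 1 - j) (q + 1) (barify k A n q g)
    ∘ₗ (castT k A (by omega : m + n - 1 = j + n + (m - 1 - j))).toLinearMap

/-- The circle product `f ∘_{-(j+1)} g` inserting `ḡ` into the `(j+1)`-st output slot of `f`. -/
def circN (p q m n : ℕ) (f : Cochain k A m p) (g : Cochain k A n q) (j : ℕ) (hj : j < p)
    (hn : 0 < n) : Cochain k A (m + n - 1) (p + q) :=
  (castO k A (by omega : j + (q + 1) + (p - 1 - j) = p + q)).toLinearMap
    ∘ₗ LinearMap.lTensor A (mapMid k A j n (p - 1 - j) (q + 1) (barify k A n q g))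
    ∘ₗ (castO k A (by omega : p + (n - 1) = j + n + (p - 1 - j))).toLinearMap
    ∘ₗ (appOut k A p (n - 1)).toLinearMap
    ∘ₗ LinearMap.rTensor (T k A (n - 1)) f
    ∘ₗ (splitT k A m (n - 1)).toLinearMap
    ∘ₗ (castT k A (by omega : m + n - 1 = m + (n - 1))).toLinearMap

/-- The full circle product
`f ∘ g = Σ_{i=1}^m (-1)^{(n-q-1)(i-1)} f∘_i g - Σ_{i=1}^p (-1)^{(n-q-1)(i-m-p-1)} f∘_{-i} g`. -/
def circC (p q m n : ℕ) (f : Cochain k A m p) (g : Cochain k A n q) :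
    Cochain k A (m + n - 1) (p + q) :=
  (∑ j ∈ (Finset.range m).attach,
      sg (((n : ℤ) - q - 1) * (j : ℕ)) •
        circP k A p q m n f g j (Finset.mem_range.mp j.2))
    - ∑ j ∈ (Finset.range p).attach,
        if hn : 0 < n then
          sg (((n : ℤ) - q - 1) * (((j : ℕ) : ℤ) - m - p)) •
            circN k A p q m n f g j (Finset.mem_range.mp j.2) hn
        else 0

/-- The cup product
`f ∪ g = (μ ⊗ id^{⊗(p+q)})(id_A ⊗ f ⊗ id^{⊗q})(g ⊗ id^{⊗m})` on singular Hochschild cochains. -/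
def cupM (p q m n : ℕ) (f : Cochain k A m p) (g : Cochain k A n q) :
    Cochain k A (n + m) (p + q) :=
  LinearMap.rTensor (T k A (p + q)) (LinearMap.mul' k A)
    ∘ₗ (TensorProduct.assoc k A A (T k A (p + q))).symm.toLinearMap
    ∘ₗ LinearMap.lTensor A
        ((appOut k A p q).toLinearMap
          ∘ₗ LinearMap.rTensor (T k A q) f
          ∘ₗ (splitT k A m q).toLinearMap
          ∘ₗ (castT k A (Nat.add_comm q m)).toLinearMap
          ∘ₗ (splitT k A q m).symm.toLinearMap)
    ∘ₗ (TensorProduct.assoc k A (T k A q) (T k A m)).toLinearMap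
    ∘ₗ LinearMap.rTensor (T k A m) g
    ∘ₗ (splitT k A n m).toLinearMap

/-- The submodule `A^∨ = Hom_{A⊗A^{op}}(A, A ⊗ A^{op}) ⊂ A ⊗ A` of Casimir-type elements:
`Σ a x_i ⊗ y_i = Σ x_i ⊗ y_i a` for all `a`. -/
def Adual : Submodule k (A ⊗[k] A) :=
  ⨅ a : A,
    LinearMap.ker
      (LinearMap.rTensor A (LinearMap.mulLeft k a) - LinearMap.lTensor A (LinearMap.mulRight k a))

/-- Ambient model for Hochschild chains with coefficients in `A^∨`:
`C_p(A, A^∨) ⊂ (A ⊗ A) ⊗ (sĀ)^{⊗p}`. -/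
abbrev Cdual (p : ℕ) : Type := (A ⊗[k] A) ⊗[k] T k A p

def dmk (p : ℕ) (x : A ⊗[k] A) (v : ℕ → A) : Cdual k A p := x ⊗ₜ tp k A p v

/-- Value of the Hochschild boundary on a generator of `C_{p+1}(A, A^∨)`, using the bimodule
structure `a·(Σ x_i ⊗ y_i)·b = Σ x_i b ⊗ a y_i` of `A^∨`. -/
def bdualGen (p : ℕ) (x : A ⊗[k] A) (v : ℕ → A) : Cdual k A p :=
  dmk k A p (LinearMap.rTensor A (LinearMap.mulRight k (v 0)) x) (shiftT v)
    + ∑ j ∈ Finset.range p, sg ((j : ℤ) + 1) • dmk k A p x (mulAt v j)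
    + sg ((p : ℤ) + 1) • dmk k A p (LinearMap.lTensor A (LinearMap.mulLeft k (v p)) x) v

def IsBdual (p : ℕ) (f : Cdual k A (p + 1) →ₗ[k] Cdual k A p) : Prop :=
  ∀ (x : A ⊗[k] A) (v : ℕ → A), f (dmk k A (p + 1) x v) = bdualGen k A p x v

/-- The multiplication map `μ : C_0(A, A^∨) → A`, `Σ x_i ⊗ y_i ↦ Σ x_i y_i`. -/
def muD : Cdual k A 0 →ₗ[k] A :=
  LinearMap.mul' k A
    ∘ₗ (TensorProduct.rid k (A ⊗[k] A)).toLinearMap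
    ∘ₗ LinearMap.lTensor (A ⊗[k] A) (PiTensorProduct.isEmptyEquiv (Fin 0)).toLinearMap

/-- The embedding `ι : C_p(A, A^∨) → Ω_nc^{p+1}(A)`,
`(Σ x_j ⊗ y_j) ⊗ s\bar a_{1,p} ↦ Σ x_j ⊗ s\bar a_{1,p} ⊗ s\bar{y_j}`. -/
def iotaN (p : ℕ) : Cdual k A p →ₗ[k] Omega k A (p + 1) :=
  LinearMap.lTensor A
      ((splitT k A p 1).symm.toLinearMap
        ∘ₗ (TensorProduct.congr (LinearEquiv.refl k (T k A p)) (bar1 k A).symm).toLinearMap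
        ∘ₗ LinearMap.lTensor (T k A p) (pr k A)
        ∘ₗ (TensorProduct.comm k A (T k A p)).toLinearMap)
    ∘ₗ (TensorProduct.assoc k A A (T k A p)).toLinearMap

/-- Value of the Hochschild boundary on a generator of `C_{m+1}(A, A)`. -/
def bGen (m : ℕ) (a0 : A) (v : ℕ → A) : Omega k A m :=
  omk k A m (a0 * v 0) (shiftT v)
    + ∑ j ∈ Finset.range m, sg ((j : ℤ) + 1) • omk k A m a0 (mulAt v j)
    + sg ((m : ℤ) + 1) • omk k A m (v m * a0) v

def IsB (m : ℕ) (bmap : Omega k A (m + 1) →ₗ[k] Omega k A m) : Prop :=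
  ∀ (a0 : A) (v : ℕ → A), bmap (omk k A (m + 1) a0 v) = bGen k A m a0 v

/-- Value of the Connes `B` operator on a generator of `C_m(A, A)`:
`B(a₀ ⊗ s\bar a_{1,m}) = Σ_{i=1}^{m+1} (-1)^{mi} 1 ⊗ s\bar a_{i,m} ⊗ s\bar a₀ ⊗ s\bar a_{1,i-1}`. -/
def BGen (m : ℕ) (a0 : A) (v : ℕ → A) : Omega k A (m + 1) :=
  ∑ t ∈ Finset.range (m + 1),
    sg ((m : ℤ) * ((t : ℤ) + 1)) •
      omk k A (m + 1) 1
        (fun j => if j < m - t then v (t + j) else if j = m - t then a0 else v (j - (m - t) - 1))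

def IsConnesB (m : ℕ) (Bm : Omega k A m →ₗ[k] Omega k A (m + 1)) : Prop :=
  ∀ (a0 : A) (v : ℕ → A), Bm (omk k A m a0 v) = BGen k A m a0 v

/-- Hochschild cochains with coefficients in `A` itself. -/
abbrev CochA (n : ℕ) : Type := T k A n →ₗ[k] A

def IsDeltaA (N : ℕ) (F : CochA k A N) (D : CochA k A (N + 1)) : Prop :=
  ∀ v : ℕ → A,
    D (tp k A (N + 1) v) =
      sg ((N : ℤ) + 1) •
        (v 0 * F (tp k A N (shiftT v))
          + ∑ i ∈ Finset.range N, sg ((i : ℤ) + 1) • F (tp k A N (mulAt v i))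
          + sg ((N : ℤ) + 1) • (F (tp k A N v) * v N))

/-- The chain-chain star product on generators:
`α ⋆ β = Σ (x'_j x_i ⊗ y'_j) ⊗ s\bar a_{1,p} ⊗ s\bar{y_i} ⊗ s\bar b_{1,q}` for
`α = (Σ x_i ⊗ y_i) ⊗ s\bar a_{1,a}` and `β = (Σ x'_j ⊗ y'_j) ⊗ s\bar b_{1,b}`. -/
def IsSt (a b c : ℕ) (st : Cdual k A a →ₗ[k] Cdual k A b →ₗ[k] Cdual k A c) : Prop :=
  ∀ (x0 x1 : A) (v : ℕ → A) (y0 y1 : A) (w : ℕ → A),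
    st (dmk k A a (x0 ⊗ₜ x1) v) (dmk k A b (y0 ⊗ₜ y1) w) =
      dmk k A c ((y0 * x0) ⊗ₜ y1) (catAt a v x1 w)

/-- The homotopy `β • α` on generators (`β` of chain degree `a`, `α` of chain degree `b`). -/
def IsBul (a b c : ℕ) (bul : Cdual k A a →ₗ[k] Cdual k A b →ₗ[k] Cdual k A c) : Prop :=
  ∀ (y0 y1 : A) (w : ℕ → A) (x0 x1 : A) (v : ℕ → A),
    bul (dmk k A a (y0 ⊗ₜ y1) w) (dmk k A b (x0 ⊗ₜ x1) v) =
      ∑ t ∈ Finset.range (b + 1),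
        sg ((a : ℤ) * ((t : ℤ) + 1)) •
          dmk k A c (x0 ⊗ₜ x1)
            (fun j =>
              if j < t then v j
              else if j = t then y0
              else if j < t + 1 + a then w (j - t - 1)
              else if j = t + 1 + a then y1
              else v (j - a - 2))

/-- The `A^∨`-coefficient part of `C_p(A, A^∨)` inside the ambient `(A ⊗ A) ⊗ (sĀ)^{⊗p}`. -/
def AdualChains (p : ℕ) : Submodule k (Cdual k A p) :=
  LinearMap.range (LinearMap.rTensor (T k A p) (Adual k A).subtype)

/-- `conv (Σ x_i ⊗ y_i) = Σ ⟨y_i, 1⟩ x_i`, the inverse of `A ≅ A^∨` for a symmetric algebra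
with bilinear form `br`. -/
def conv (br : A →ₗ[k] A →ₗ[k] k) : A ⊗[k] A →ₗ[k] A :=
  (TensorProduct.rid k A).toLinearMap ∘ₗ
    LinearMap.lTensor A
      ((LinearMap.ringLmapEquivSelf k k k).symm 1 ∘ₗ (br.flip 1))

end

end TateHochschild

namespace TateHochschild

noncomputable section

/-- Value of the projection `Bar_{p+1}(A) ↠ Ω_sy^{p+1}(A) ≅ Ω_nc^{p+1}(A)` on generators
(cf. Statement 3). -/
def dbarGen (k A : Type) [Field k] [Ring A] [Algebra k A] (p : ℕ) (a0 : A) (v : ℕ → A)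
    (a' : A) : Omega k A (p + 1) :=
  omk k A (p + 1) (a0 * v 0) (setAt (shiftT v) p a')
    + ∑ i ∈ Finset.range p, sg ((i : ℤ) + 1) • omk k A (p + 1) a0 (setAt (mulAt v i) p a')
    + sg ((p : ℤ) + 1) • omk k A (p + 1) a0 (setAt v p (v p * a'))

/-- The inclusion `s^{-1}Ω_nc^{p+2}(A) ↪ Bar_{p+1}(A)` of the short exact sequence
`0 → s^{-1}Ω^{p+2} → Bar_{p+1} → Ω^{p+1} → 0`: it is the bar differential `D` applied to
`x ↦ (-1)^{p+2} x ⊗ 1`. -/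
def iotaSES (k A : Type) [Field k] [Ring A] [Algebra k A] (p : ℕ)
    (D : Bar k A (p + 2) →ₗ[k] Bar k A (p + 1)) : Omega k A (p + 2) →ₗ[k] Bar k A (p + 1) :=
  sg ((p : ℤ) + 2) •
    (D ∘ₗ LinearMap.lTensor A ((TensorProduct.mk k (T k A (p + 2)) A).flip 1))

/-- The Hochschild differential for cochains with coefficients in the bar bimodule
`Bar_{p+1}(A)`, characterized on generators. -/
def IsDeltaBar (k A : Type) [Field k] [Ring A] [Algebra k A] (p N : ℕ)
    (F : T k A N →ₗ[k] Bar k A (p + 1)) (D : T k A (N + 1) →ₗ[k] Bar k A (p + 1)) : Prop :=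
  ∀ v : ℕ → A,
    D (tp k A (N + 1) v) =
      sg ((N : ℤ) + (p + 1) + 1) •
        (LinearMap.rTensor (T k A (p + 1) ⊗[k] A) (LinearMap.mulLeft k (v 0))
            (F (tp k A N (shiftT v)))
          + ∑ i ∈ Finset.range N, sg ((i : ℤ) + 1) • F (tp k A N (mulAt v i))
          + sg ((N : ℤ) + 1) •
              LinearMap.lTensor A (LinearMap.lTensor (T k A (p + 1)) (LinearMap.mulRight k (v N)))
                (F (tp k A N v)))

end


noncomputable section Aux

variable {k A : Type} [Field k] [Ring A] [Algebra k A]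

lemma sg_add (a b : ℤ) : sg (a + b) = sg a * sg b := by
  by_cases ha : Even a <;> by_cases hb : Even b <;> simp [sg, Int.even_add, ha, hb]

lemma sg_sq (a : ℤ) : sg a * sg a = 1 := by
  unfold sg; split_ifs <;> ring

lemma sg_smul_sg {M : Type} [AddCommGroup M] (a b : ℤ) (x : M) :
    sg a • sg b • x = sg (a + b) • x := by
  rw [← mul_smul, ← sg_add]

lemma pr_one : pr k A 1 = 0 := by
  simp [pr, Submodule.mkQ_apply, Submodule.Quotient.mk_eq_zero]

lemma tp_congr {n : ℕ} {v w : ℕ → A} (h : ∀ i < n, v i = w i) :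
    tp k A n v = tp k A n w := by
  unfold tp
  congr 1
  funext i
  rw [h i i.isLt]

lemma tp_zero {n : ℕ} {v : ℕ → A} {i : ℕ} (hi : i < n) (h : pr k A (v i) = 0) :
    tp k A n v = 0 := by
  unfold tp
  exact MultilinearMap.map_coord_zero _ (⟨i, hi⟩ : Fin n) h

lemma tp_ext {n : ℕ} {X : Type} [AddCommGroup X] [Module k X]
    {F G : T k A n →ₗ[k] X} (h : ∀ v : ℕ → A, F (tp k A n v) = G (tp k A n v)) :
    F = G := by
  apply PiTensorProduct.ext
  apply MultilinearMap.ext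
  intro x
  have : ∀ i : Fin n, ∃ a : A, pr k A a = x i := fun i =>
    Submodule.mkQ_surjective _ (x i)
  choose va hva using this
  set v : ℕ → A := fun j => if hj : j < n then va ⟨j, hj⟩ else 0 with hv
  have hx : x = fun i : Fin n => pr k A (v i) := by
    funext i
    simp [hv, i.isLt, hva]
  simp only [LinearMap.compMultilinearMap_apply, hx]
  exact h v

lemma omk_ext {n : ℕ} {X : Type} [AddCommGroup X] [Module k X]
    {F G : Omega k A n →ₗ[k] X}
    (h : ∀ (a0 : A) (v : ℕ → A), F (omk k A n a0 v) = G (omk k A n a0 v)) :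
    F = G := by
  apply TensorProduct.ext'
  intro a t
  have : F ∘ₗ TensorProduct.mk k A (T k A n) a = G ∘ₗ TensorProduct.mk k A (T k A n) a :=
    tp_ext (fun v => h a v)
  exact LinearMap.congr_fun this t

lemma bmk_ext {n : ℕ} {X : Type} [AddCommGroup X] [Module k X]
    {F G : Bar k A n →ₗ[k] X}
    (h : ∀ (a0 : A) (v : ℕ → A) (a' : A), F (bmk k A n a0 v a') = G (bmk k A n a0 v a')) :
    F = G := by
  apply TensorProduct.ext'
  intro a y
  induction y using TensorProduct.induction_on with
  | zero => simp
  | add x y hx hy => simp [tmul_add, hx, hy]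
  | tmul t a' =>
    have : F ∘ₗ ((TensorProduct.mk k A (T k A n ⊗[k] A) a) ∘ₗ
            ((TensorProduct.mk k (T k A n) A).flip a'))
        = G ∘ₗ ((TensorProduct.mk k A (T k A n ⊗[k] A) a) ∘ₗ
            ((TensorProduct.mk k (T k A n) A).flip a')) :=
      tp_ext (fun v => h a v a')
    exact LinearMap.congr_fun this t

lemma castT_tp {a b : ℕ} (h : a = b) (v : ℕ → A) :
    castT k A h (tp k A a v) = tp k A b v := by
  unfold castT tp
  rw [PiTensorProduct.reindex_tprod]
  congr 1

lemma splitT_tp (a b : ℕ) (v : ℕ → A) :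
    splitT k A a b (tp k A (a + b) v) =
      tp k A a v ⊗ₜ tp k A b (fun j => v (a + j)) := by
  unfold splitT tp
  rw [LinearEquiv.trans_apply, PiTensorProduct.reindex_tprod]
  simp only [Equiv.symm_symm]
  have heq : (fun i : Fin a ⊕ Fin b => pr k A (v (finSumFinEquiv i)))
      = Sum.elim (fun i : Fin a => pr k A (v (i : ℕ)))
          (fun j : Fin b => pr k A (v (a + (j : ℕ)))) := by
    funext i
    cases i with
    | inl i => simp
    | inr j => simp [finSumFinEquiv_apply_right]
  exact (congrArg (PiTensorProduct.tmulEquiv k (Abar k A)).symm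
      (congrArg (PiTensorProduct.tprod k) heq)).trans (PiTensorProduct.tmulEquiv_symm_apply (R := k) (M := Abar k A)
      (Sum.elim (fun i : Fin a => pr k A (v (i : ℕ)))
        (fun j : Fin b => pr k A (v (a + (j : ℕ))))))

lemma splitT_symm_tp (a b : ℕ) (v w : ℕ → A) :
    (splitT k A a b).symm (tp k A a v ⊗ₜ tp k A b w) =
      tp k A (a + b) (fun j => if j < a then v j else w (j - a)) := by
  rw [LinearEquiv.symm_apply_eq, splitT_tp]
  congr 1
  · exact tp_congr (fun i hi => by simp [hi])
  · exact tp_congr (fun i hi => by simp [Nat.add_sub_cancel_left])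

lemma bar1_symm_pr (a : A) :
    (bar1 k A).symm (pr k A a) = tp k A 1 (fun _ => a) := by
  rw [LinearEquiv.symm_apply_eq]
  unfold bar1 tp
  rw [PiTensorProduct.subsingletonEquiv_apply_tprod]

/-- append one bar: `x ↦ x ⊗ s\bar a`. -/
def apm (q : ℕ) (a : A) : Omega k A q →ₗ[k] Omega k A (q + 1) :=
  (appOut k A q 1).toLinearMap ∘ₗ
    (TensorProduct.mk k (Omega k A q) (T k A 1)).flip (tp k A 1 (fun _ => a))

lemma apm_omk (q : ℕ) (a : A) (a0 : A) (v : ℕ → A) :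
    apm q a (omk k A q a0 v) = omk k A (q + 1) a0 (setAt v q a) := by
  unfold apm appOut omk
  simp only [LinearMap.comp_apply, LinearMap.flip_apply, TensorProduct.mk_apply,
    LinearEquiv.coe_coe, LinearEquiv.trans_apply, TensorProduct.assoc_tmul,
    TensorProduct.congr_tmul, LinearEquiv.refl_apply, splitT_symm_tp]
  congr 1
  apply tp_congr
  intro i hi
  simp only [setAt]
  split_ifs <;> first | rfl | omega | simp_all

lemma lmul_omk (n : ℕ) (a a0 : A) (v : ℕ → A) :
    lmul k A n a (omk k A n a0 v) = omk k A n (a * a0) v := rfl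

lemma thetaM_tp (q N : ℕ) (f : Cochain k A N q) (v : ℕ → A) :
    thetaM k A q N f (tp k A (N + 1) v) = apm q (v N) (f (tp k A N v)) := by
  unfold thetaM apm
  simp only [LinearMap.comp_apply, LinearEquiv.coe_coe, splitT_tp,
    LinearMap.rTensor_tmul, LinearMap.flip_apply, TensorProduct.mk_apply]
  congr 2
  exact tp_congr (fun i hi => by interval_cases i <;> simp)

/-- retraction `Bar_{p+1} → Ω^{p+2}` appending the last `A` factor as a bar. -/
def rmap (p : ℕ) : Bar k A (p + 1) →ₗ[k] Omega k A (p + 2) :=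
  LinearMap.lTensor A
    ((splitT k A (p + 1) 1).symm.toLinearMap
      ∘ₗ (TensorProduct.congr (LinearEquiv.refl k (T k A (p + 1)))
            (bar1 k A).symm).toLinearMap
      ∘ₗ LinearMap.lTensor (T k A (p + 1)) (pr k A))

lemma rmap_bmk (p : ℕ) (a0 : A) (v : ℕ → A) (a' : A) :
    rmap p (bmk k A (p + 1) a0 v a') = omk k A (p + 2) a0 (setAt v (p + 1) a') := by
  unfold rmap bmk omk
  simp only [LinearMap.lTensor_tmul, LinearMap.comp_apply, LinearEquiv.coe_coe,
    TensorProduct.congr_tmul, LinearEquiv.refl_apply, bar1_symm_pr, splitT_symm_tp]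
  congr 1
  apply tp_congr
  intro i hi
  simp only [setAt]
  split_ifs <;> first | rfl | omega | simp_all

lemma omk_zero {n : ℕ} (a0 : A) {v : ℕ → A} {i : ℕ} (hi : i < n) (h : pr k A (v i) = 0) :
    omk k A n a0 v = 0 := by
  unfold omk
  rw [tp_zero hi h, TensorProduct.tmul_zero]

lemma rmap_iota (p : ℕ) (D : Bar k A (p + 2) →ₗ[k] Bar k A (p + 1))
    (hD : IsBarDiff k A (p + 1) D) (x : Omega k A (p + 2)) :
    rmap p (iotaSES k A p D x) = x := by
  have : (rmap p ∘ₗ iotaSES k A p D : Omega k A (p + 2) →ₗ[k] Omega k A (p + 2))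
      = LinearMap.id := by
    apply omk_ext
    intro a0 v
    simp only [LinearMap.comp_apply, LinearMap.id_apply]
    have h1 : iotaSES k A p D (omk k A (p + 2) a0 v)
        = sg ((p : ℤ) + 2) • D (bmk k A (p + 2) a0 v 1) := rfl
    rw [h1, hD a0 v 1, map_zsmul (rmap p)]
    have e1 : rmap p (dGen k A (p + 1) a0 v 1) = sg ((p : ℤ) + 2) • omk k A (p + 2) a0 v := by
      unfold dGen
      rw [map_add, map_add, map_zsmul (rmap p), map_sum, rmap_bmk, rmap_bmk]
      rw [omk_zero (n := p + 2) (a0 * v 0) (v := setAt (shiftT v) (p + 1) 1) (i := p + 1)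
        (by omega) (by simp [setAt, pr_one])]
      rw [Finset.sum_congr rfl (fun i hi => by
        rw [map_zsmul (rmap p), rmap_bmk,
          omk_zero (n := p + 2) a0 (v := setAt (mulAt v i) (p + 1) 1)
            (i := p + 1) (by omega) (by simp [setAt, pr_one]), smul_zero])]
      rw [Finset.sum_const_zero, mul_one]
      have h3 : setAt v (p + 1) (v (p + 1)) = v := by
        funext j
        simp only [setAt]
        split_ifs with hj
        · rw [hj]
        · rfl
      rw [h3, zero_add, zero_add]
      have h5 : ((p + 1 : ℕ) : ℤ) + 1 = (p : ℤ) + 2 := by push_cast; ring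
      rw [h5]
    rw [e1, sg_smul_sg]
    have h4 : sg ((p : ℤ) + 2 + ((p : ℤ) + 2)) = 1 := by
      unfold sg
      rw [if_pos ⟨(p : ℤ) + 2, by ring⟩]
    rw [h4, one_smul]

  exact LinearMap.congr_fun this x

lemma omk_congr {n : ℕ} (a0 : A) {v w : ℕ → A} (h : ∀ i < n, v i = w i) :
    omk k A n a0 v = omk k A n a0 w := by
  unfold omk
  rw [tp_congr h]

lemma sg_add_two (z : ℤ) : sg (z + 2) = sg z := by
  simp [sg, Int.even_add]

lemma sg_even (z : ℤ) : sg (z + z) = 1 := by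
  unfold sg
  rw [if_pos ⟨z, rfl⟩]

lemma rmap_left (p : ℕ) (a : A) (x : Bar k A (p + 1)) :
    rmap p (LinearMap.rTensor (T k A (p + 1) ⊗[k] A) (LinearMap.mulLeft k a) x)
      = lmul k A (p + 2) a (rmap p x) := by
  have : rmap p ∘ₗ LinearMap.rTensor (T k A (p + 1) ⊗[k] A) (LinearMap.mulLeft k a)
      = lmul k A (p + 2) a ∘ₗ rmap p := by
    apply bmk_ext
    intro a0 v a'
    simp only [LinearMap.comp_apply]
    rw [show LinearMap.rTensor (T k A (p + 1) ⊗[k] A) (LinearMap.mulLeft k a)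
        (bmk k A (p + 1) a0 v a') = bmk k A (p + 1) (a * a0) v a' from rfl,
      rmap_bmk, rmap_bmk, lmul_omk]
  exact LinearMap.congr_fun this x

lemma rmap_right (p : ℕ)
    (P : Bar k A (p + 1) →ₗ[k] Omega k A (p + 1))
    (hP : ∀ (a0 : A) (v : ℕ → A) (a' : A),
      P (bmk k A (p + 1) a0 v a') = dbarGen k A p a0 v a')
    (act2 : Omega k A (p + 2) →ₗ[k] A →ₗ[k] Omega k A (p + 2))
    (hact2 : IsRAct k A (p + 2) act2) (a : A) (x : Bar k A (p + 1)) :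
    rmap p (LinearMap.lTensor A (LinearMap.lTensor (T k A (p + 1)) (LinearMap.mulRight k a)) x)
      = act2 (rmap p x) a - sg (p : ℤ) • apm (p + 1) a (P x) := by
  have main : rmap p ∘ₗ
        LinearMap.lTensor A (LinearMap.lTensor (T k A (p + 1)) (LinearMap.mulRight k a))
      = (act2.flip a ∘ₗ rmap p)
          - sg (p : ℤ) • ((apm (p + 1) a : Omega k A (p+1) →ₗ[k] Omega k A (p+2)) ∘ₗ P) := by
    apply bmk_ext
    intro a0 v a'
    simp only [LinearMap.comp_apply, LinearMap.sub_apply, LinearMap.smul_apply,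
      LinearMap.flip_apply]
    rw [show LinearMap.lTensor A (LinearMap.lTensor (T k A (p + 1)) (LinearMap.mulRight k a))
        (bmk k A (p + 1) a0 v a') = bmk k A (p + 1) a0 v (a' * a) from rfl,
      rmap_bmk, rmap_bmk, hact2, hP]
    -- canonical pieces
    set Z0 := omk k A (p + 2) (a0 * v 0) (setAt (setAt (shiftT v) p a') (p + 1) a) with hZ0
    set S := ∑ i ∈ Finset.range p,
        sg ((i : ℤ) + 1) • omk k A (p + 2) a0 (setAt (setAt (mulAt v i) p a') (p + 1) a)
      with hS
    set Zp := omk k A (p + 2) a0 (setAt (setAt v p (v p * a')) (p + 1) a) with hZp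
    set Zl := omk k A (p + 2) a0 (setAt v (p + 1) (a' * a)) with hZl
    have E0 : omk k A (p + 2) (a0 * setAt (setAt v (p + 1) a') (p + 2) a 0)
          (shiftT (setAt (setAt v (p + 1) a') (p + 2) a)) = Z0 := by
      rw [hZ0, show setAt (setAt v (p + 1) a') (p + 2) a 0 = v 0 by
        simp only [setAt]; split_ifs <;> first | rfl | omega | simp_all]
      apply omk_congr
      intro j hj
      simp only [shiftT, setAt]
      split_ifs <;> first | rfl | omega | simp_all
    have Ei : ∀ i < p, omk k A (p + 2) a0 (mulAt (setAt (setAt v (p + 1) a') (p + 2) a) i)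
        = omk k A (p + 2) a0 (setAt (setAt (mulAt v i) p a') (p + 1) a) := by
      intro i hip
      apply omk_congr
      intro j hj
      simp only [mulAt, setAt]
      split_ifs <;> first | rfl | omega | simp_all
    have Ep : omk k A (p + 2) a0 (mulAt (setAt (setAt v (p + 1) a') (p + 2) a) p) = Zp := by
      rw [hZp]
      apply omk_congr
      intro j hj
      simp only [mulAt, setAt]
      split_ifs <;> first | rfl | omega | simp_all
    have El : omk k A (p + 2) a0 (mulAt (setAt (setAt v (p + 1) a') (p + 2) a) (p + 1))
        = Zl := by
      rw [hZl]
      apply omk_congr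
      intro j hj
      simp only [mulAt, setAt]
      split_ifs <;> first | rfl | omega | simp_all
    have cp : sg (((p + 2 : ℕ) : ℤ) + ((p : ℕ) : ℤ) + 1) = sg ((p : ℤ) + ((p : ℤ) + 1)) := by
      rw [show (((p + 2 : ℕ) : ℤ) + ((p : ℕ) : ℤ) + 1) = ((p : ℤ) + ((p : ℤ) + 1)) + 2 by
        push_cast; ring, sg_add_two]
    have cl : sg (((p + 2 : ℕ) : ℤ) + ((p + 1 : ℕ) : ℤ) + 1) = 1 := by
      rw [show (((p + 2 : ℕ) : ℤ) + ((p + 1 : ℕ) : ℤ) + 1) = ((p : ℤ) + 2) + ((p : ℤ) + 2) by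
        push_cast; ring, sg_even]
    have c0 : sg (((p + 2 : ℕ) : ℤ)) = sg ((p : ℤ)) := by
      rw [show (((p + 2 : ℕ) : ℤ)) = (p : ℤ) + 2 by push_cast; ring, sg_add_two]
    have hsum1 : (∑ i ∈ Finset.range p,
          sg (((p + 2 : ℕ) : ℤ) + (i : ℕ) + 1) •
            omk k A (p + 2) a0 (mulAt (setAt (setAt v (p + 1) a') (p + 2) a) i))
        = sg ((p : ℤ)) • S := by
      rw [hS, Finset.smul_sum]
      apply Finset.sum_congr rfl
      intro i hi
      rw [Ei i (Finset.mem_range.mp hi),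
        show (((p + 2 : ℕ) : ℤ) + (i : ℕ) + 1) = ((p : ℤ) + ((i : ℤ) + 1)) + 2 by
          push_cast; ring, sg_add_two, sg_add, mul_smul]
    have hact : rGen k A (p + 2) a0 (setAt v (p + 1) a') a
        = (sg ((p : ℤ)) • Z0 + sg ((p : ℤ)) • S + sg ((p : ℤ) + ((p : ℤ) + 1)) • Zp) + Zl := by
      unfold rGen
      rw [Finset.sum_range_succ, Finset.sum_range_succ, E0, Ep, El, c0, cp, cl, one_smul,
        hsum1]
      abel
    have hsum2 : apm (p + 1) a (∑ i ∈ Finset.range p,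
          sg ((i : ℤ) + 1) • omk k A (p + 1) a0 (setAt (mulAt v i) p a'))
        = S := by
      rw [hS, map_sum]
      apply Finset.sum_congr rfl
      intro i hi
      rw [map_zsmul (apm (p + 1) a), apm_omk]
    have hapm : apm (p + 1) a (dbarGen k A p a0 v a') = Z0 + S + sg ((p : ℤ) + 1) • Zp := by
      unfold dbarGen
      rw [map_add, map_add, hsum2, map_zsmul (apm (p + 1) a), apm_omk, apm_omk, hZ0, hZp]
    rw [hact, hapm, smul_add, smul_add, sg_smul_sg]
    exact (add_sub_cancel_left _ _).symm
  exact LinearMap.congr_fun main x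

lemma sg_succ (z : ℤ) : sg (z + 1) = -sg z := by
  by_cases h : Even z <;> simp [sg, Int.even_add_one, h]

lemma sg_odd (z : ℤ) : sg (z + z + 1) = -1 := by
  unfold sg
  rw [if_neg]
  rw [Int.even_add_one]
  exact not_not_intro ⟨z, rfl⟩

end Aux

/-- For a Noetherian `k`-algebra `A`, the stabilization map
`HH^m(θ_{p+1}) : HH^m(A, Ω_nc^{p+1}(A)) → HH^m(A, Ω_nc^{p+2}(A))` coincides with the
connecting morphism of the long exact cohomology sequence of the short exact sequence
`0 → s^{-1}Ω_nc^{p+2}(A) → Bar_{p+1}(A) → Ω_nc^{p+1}(A) → 0`: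
if `f` is a cocycle of arity `N` with coefficients in `Ω^{p+1}`, `g` is any cochain lift of `f`
to `Bar_{p+1}`-coefficients (along the projection `P` given on generators by `dbarGen`), `Dg` is
its Hochschild differential, and `h` is the cochain with coefficients in `Ω^{p+2}` with
`ι(h) = Dg` (so that the connecting morphism sends `[f]` to `[h]`), then `h` and `θ(f)` are
cohomologous: `h - θ(f) = δ(u)` for some cochain `u`. -/
theorem theta_is_connecting_morphism
    (k A : Type) [Field k] [Ring A] [Algebra k A] [IsNoetherianRing A] (p N : ℕ)
    (D : Bar k A (p + 2) →ₗ[k] Bar k A (p + 1)) (hD : IsBarDiff k A (p + 1) D)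
    (P : Bar k A (p + 1) →ₗ[k] Omega k A (p + 1))
    (hP : ∀ (a0 : A) (v : ℕ → A) (a' : A),
      P (bmk k A (p + 1) a0 v a') = dbarGen k A p a0 v a')
    (act1 : Omega k A (p + 1) →ₗ[k] A →ₗ[k] Omega k A (p + 1))
    (hact1 : IsRAct k A (p + 1) act1)
    (act2 : Omega k A (p + 2) →ₗ[k] A →ₗ[k] Omega k A (p + 2))
    (hact2 : IsRAct k A (p + 2) act2)
    (f : Cochain k A N (p + 1))
    (Df : Cochain k A (N + 1) (p + 1)) (hDf : IsDelta k A (p + 1) N act1 f Df)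
    (hcocycle : Df = 0)
    (g : T k A N →ₗ[k] Bar k A (p + 1))
    (hlift : ∀ v : ℕ → A, P (g (tp k A N v)) = f (tp k A N v))
    (Dg : T k A (N + 1) →ₗ[k] Bar k A (p + 1)) (hDg : IsDeltaBar k A p N g Dg)
    (h : Cochain k A (N + 1) (p + 2))
    (hh : ∀ x : T k A (N + 1), iotaSES k A p D (h x) = Dg x) :
    ∃ (u : Cochain k A N (p + 2)) (Du : Cochain k A (N + 1) (p + 2)),
      IsDelta k A (p + 2) N act2 u Du ∧
      ∀ v : ℕ → A,
        h (tp k A (N + 1) v) - (thetaM k A (p + 1) N f) (tp k A (N + 1) v) =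
          Du (tp k A (N + 1) v) := by
  refine ⟨-(rmap p ∘ₗ g), h - thetaM k A (p + 1) N f, ?_, fun v => rfl⟩
  intro v
  have hval : h (tp k A (N + 1) v) = rmap p (Dg (tp k A (N + 1) v)) := by
    rw [← hh (tp k A (N + 1) v), rmap_iota p D hD]
  have hsum : rmap p (∑ i ∈ Finset.range N, sg ((i : ℤ) + 1) • g (tp k A N (mulAt v i)))
      = ∑ i ∈ Finset.range N, sg ((i : ℤ) + 1) • rmap p (g (tp k A N (mulAt v i))) := by
    rw [map_sum]
    exact Finset.sum_congr rfl fun i hi => map_zsmul (rmap p) _ _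
  rw [LinearMap.sub_apply, hval, hDg v, map_zsmul (rmap p), map_add, map_add,
    map_zsmul (rmap p), hsum, rmap_left, rmap_right p P hP act2 hact2, hlift v, thetaM_tp]
  simp only [LinearMap.neg_apply, LinearMap.comp_apply, map_neg, smul_neg,
    Finset.sum_neg_distrib]
  have hA : sg ((N : ℤ) + ((p + 2 : ℕ) : ℤ) + 1) = -sg ((N : ℤ) + ((p : ℤ) + 1) + 1) := by
    rw [show ((N : ℤ) + ((p + 2 : ℕ) : ℤ) + 1) = ((N : ℤ) + ((p : ℤ) + 1) + 1) + 1 by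
      push_cast; ring, sg_succ]
  have hB : sg ((N : ℤ) + ((p : ℤ) + 1) + 1) * (sg ((N : ℤ) + 1) * sg ((p : ℤ))) = -1 := by
    rw [← sg_add, ← sg_add]
    rw [show (N : ℤ) + ((p : ℤ) + 1) + 1 + ((N : ℤ) + 1 + (p : ℤ))
        = (((N : ℤ) + (p : ℤ) + 1) + ((N : ℤ) + (p : ℤ) + 1)) + 1 by ring]
    exact sg_odd _
  rw [hA]
  match_scalars <;> first | ring1 | linear_combination hB | linear_combination -hB


end TateHochschild
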